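/- arXiv:1811.00457 — 3 statements merged into one kernel-verified Lean document; each statement's English description precedes it below -/
import Mathlib

section
/- For all real numbers a > 0 and b, the integral over the real line ∫_{-∞}^{∞} y · Φ((y + b)/a) · φ(y) dy equals φ(b/√(a² + 1)) / √(a² + 1). -/
open MeasureTheory Real

/-- Standard normal density. -/
noncomputable def stdNormalPdf (x : ℝ) : ℝ := Real.exp (-x ^ 2 / 2) / Real.sqrt (2 * Real.pi)

/-- Standard normal CDF. -/
noncomputable def stdNormalCdf (x : ℝ) : ℝ := ∫ t in Set.Iic x, stdNormalPdf t

/-!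
Stein's identity `∫ x G(x) φ(x) dx = ∫ G'(x) φ(x) dx`, i.e. integration by parts against
`φ' = -x φ`, applied to `G(y) = Φ((y + b) / a)` turns the integral into
`a⁻¹ ∫ φ(y) φ((y + b) / a) dy`. Completing the square in the exponent makes this a shifted
Gaussian integral, which evaluates to `φ(b / √(a² + 1)) / √(a² + 1)`.
-/

open ProbabilityTheory Set

theorem hasDerivAt_integral_Iic {E : Type*} [NormedAddCommGroup E] [NormedSpace ℝ E]
    [CompleteSpace E] {f : ℝ → E} (hf : Integrable f) (hc : Continuous f) (x : ℝ) :
    HasDerivAt (fun u => ∫ t in Iic u, f t) (f x) x := by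
  have hsplit :
      (fun u => ∫ t in Iic u, f t) = fun u => (∫ t in Iic 0, f t) + ∫ t in 0..u, f t := by
    funext u
    rw [← intervalIntegral.integral_Iic_sub_Iic hf.integrableOn hf.integrableOn]
    abel
  rw [hsplit]
  exact (intervalIntegral.integral_hasDerivAt_right hf.intervalIntegrable
    hc.stronglyMeasurable.stronglyMeasurableAtFilter hc.continuousAt).const_add _

theorem stdNormalPdf_eq_gaussianPDFReal : stdNormalPdf = gaussianPDFReal 0 1 := by
  funext x
  simp [stdNormalPdf, gaussianPDFReal, div_eq_inv_mul]

theorem stdNormalPdf_nonneg (x : ℝ) : 0 ≤ stdNormalPdf x := by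
  rw [stdNormalPdf_eq_gaussianPDFReal]; exact gaussianPDFReal_nonneg 0 1 x

theorem stdNormalPdf_le (x : ℝ) : stdNormalPdf x ≤ 1 / √(2 * π) := by
  unfold stdNormalPdf
  gcongr
  exact exp_le_one_iff.2 (by nlinarith [sq_nonneg x])

@[fun_prop]
theorem continuous_stdNormalPdf : Continuous stdNormalPdf := by
  unfold stdNormalPdf; fun_prop

theorem integrable_stdNormalPdf : Integrable stdNormalPdf := by
  rw [stdNormalPdf_eq_gaussianPDFReal]; exact integrable_gaussianPDFReal 0 1

theorem integral_stdNormalPdf : ∫ x, stdNormalPdf x = 1 := by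
  rw [stdNormalPdf_eq_gaussianPDFReal]; exact integral_gaussianPDFReal_eq_one 0 one_ne_zero

theorem integrable_id_mul_stdNormalPdf : Integrable fun x => x * stdNormalPdf x := by
  refine ((integrable_mul_exp_neg_mul_sq (by norm_num : (0:ℝ) < 1 / 2)).div_const
    √(2 * π)).congr (Filter.Eventually.of_forall fun x => ?_)
  dsimp only [stdNormalPdf]
  ring_nf

theorem hasDerivAt_stdNormalPdf (x : ℝ) :
    HasDerivAt stdNormalPdf (-(x * stdNormalPdf x)) x := by
  refine (((hasDerivAt_pow 2 x).neg.div_const 2).exp.div_const √(2 * π)).congr_deriv ?_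
  simp only [stdNormalPdf, Pi.neg_apply]
  push_cast
  ring

theorem hasDerivAt_stdNormalCdf (x : ℝ) : HasDerivAt stdNormalCdf (stdNormalPdf x) x :=
  hasDerivAt_integral_Iic integrable_stdNormalPdf continuous_stdNormalPdf x

theorem abs_stdNormalCdf_le_one (x : ℝ) : |stdNormalCdf x| ≤ 1 := by
  unfold stdNormalCdf
  rw [abs_of_nonneg (setIntegral_nonneg measurableSet_Iic fun t _ => stdNormalPdf_nonneg t),
    ← integral_stdNormalPdf]
  exact setIntegral_le_integral integrable_stdNormalPdf
    (Filter.Eventually.of_forall stdNormalPdf_nonneg)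

theorem integral_id_mul_mul_stdNormalPdf {G G' : ℝ → ℝ} {C : ℝ}
    (hG : ∀ x, HasDerivAt G (G' x) x) (hG_bdd : ∀ x, |G x| ≤ C)
    (hG' : Integrable fun x => G' x * stdNormalPdf x) :
    ∫ x, x * G x * stdNormalPdf x = ∫ x, G' x * stdNormalPdf x := by
  have hGm : AEStronglyMeasurable G :=
    (continuous_iff_continuousAt.2 fun x => (hG x).continuousAt).aestronglyMeasurable
  have hparts := integral_mul_deriv_eq_deriv_mul_of_integrable (u := G)
    (v := fun x => -stdNormalPdf x) (v' := fun x => x * stdNormalPdf x)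
    (fun x _ => hG x) (fun x _ => (hasDerivAt_stdNormalPdf x).neg.congr_deriv (neg_neg _))
    (integrable_id_mul_stdNormalPdf.bdd_mul hGm (Filter.Eventually.of_forall hG_bdd))
    (by simpa [Pi.mul_def] using hG'.neg)
    (integrable_stdNormalPdf.neg.bdd_mul hGm (Filter.Eventually.of_forall hG_bdd))
  simp only [mul_neg, integral_neg, neg_neg] at hparts
  rw [← hparts]
  congr 1 with x
  ring

theorem stdNormalPdf_mul_stdNormalPdf_add_div {a : ℝ} (ha : a ≠ 0) (b y : ℝ) :
    stdNormalPdf y * stdNormalPdf ((y + b) / a) =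
      stdNormalPdf (b / √(a ^ 2 + 1)) / √(2 * π) *
        exp (-((a ^ 2 + 1) / (2 * a ^ 2)) * (y + b / (a ^ 2 + 1)) ^ 2) := by
  have hs : √(a ^ 2 + 1) ^ 2 = a ^ 2 + 1 := sq_sqrt (by positivity)
  simp only [stdNormalPdf, div_pow, hs]
  rw [div_mul_div_comm, div_div, div_mul_eq_mul_div, ← exp_add, ← exp_add]
  congr 2
  field_simp
  ring

theorem integral_stdNormalPdf_mul_stdNormalPdf_add_div {a : ℝ} (ha : a ≠ 0) (b : ℝ) :
    ∫ y, stdNormalPdf y * stdNormalPdf ((y + b) / a) =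
      |a| * stdNormalPdf (b / √(a ^ 2 + 1)) / √(a ^ 2 + 1) := by
  simp only [stdNormalPdf_mul_stdNormalPdf_add_div ha, integral_const_mul,
    integral_add_right_eq_self fun y => exp (-((a ^ 2 + 1) / (2 * a ^ 2)) * y ^ 2),
    integral_gaussian]
  have hsqrt : √(π / ((a ^ 2 + 1) / (2 * a ^ 2))) = √(2 * π) * |a| / √(a ^ 2 + 1) := by
    rw [show π / ((a ^ 2 + 1) / (2 * a ^ 2)) = 2 * π * a ^ 2 / (a ^ 2 + 1) by field_simp,
      sqrt_div' _ (by positivity), sqrt_mul' _ (sq_nonneg a), sqrt_sq_eq_abs]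
  rw [hsqrt]
  field_simp

theorem integral_id_mul_cdf_mul_pdf (a b : ℝ) (ha : 0 < a) :
    (∫ y : ℝ, y * stdNormalCdf ((y + b) / a) * stdNormalPdf y) =
      stdNormalPdf (b / Real.sqrt (a ^ 2 + 1)) / Real.sqrt (a ^ 2 + 1) := by
  have hderiv (y : ℝ) : HasDerivAt (fun y => stdNormalCdf ((y + b) / a))
      (stdNormalPdf ((y + b) / a) * (1 / a)) y :=
    (hasDerivAt_stdNormalCdf _).comp y (((hasDerivAt_id' y).add_const b).div_const a)
  have hint : Integrable fun y => stdNormalPdf ((y + b) / a) * (1 / a) * stdNormalPdf y := by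
    refine integrable_stdNormalPdf.bdd_mul (c := 1 / √(2 * π) * (1 / a)) (by fun_prop) ?_
    refine Filter.Eventually.of_forall fun y => ?_
    rw [norm_mul, norm_of_nonneg (stdNormalPdf_nonneg _), norm_of_nonneg (by positivity)]
    gcongr
    exact stdNormalPdf_le _
  calc ∫ y, y * stdNormalCdf ((y + b) / a) * stdNormalPdf y
      = ∫ y, stdNormalPdf ((y + b) / a) * (1 / a) * stdNormalPdf y :=
        integral_id_mul_mul_stdNormalPdf hderiv (fun y => abs_stdNormalCdf_le_one _) hint
    _ = 1 / a * ∫ y, stdNormalPdf y * stdNormalPdf ((y + b) / a) := by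
        rw [← integral_const_mul]
        congr 1 with y
        ring
    _ = stdNormalPdf (b / √(a ^ 2 + 1)) / √(a ^ 2 + 1) := by
        rw [integral_stdNormalPdf_mul_stdNormalPdf_add_div ha.ne', abs_of_pos ha]
        field_simp
end

section
/- Let N > 0, s > 0, σ > 0, μ be real, z > 0 and d > 0, and let n_HT = 2·z²·s²/d² be the sample size recommended by a classical hypothesis test. Let Reg(n) = N·(μ + σ/√π) − (N·μ + (N − 2n)·σ²/(√π·√(σ² + s²/n))). Then Reg(n_HT) > N·(σ/√π)·d²/(4·z²·σ² + 2·d²). In particular the regret from using the hypothesis-test sample size grows at least linearly in N. -/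
/-!
With `a = s² / n` and `Q = √(σ² + a)`, the regret is `σ/√π · (N (1 - σ/Q) + 2nσ/Q)`, which exceeds
`N σ/√π · (1 - σ/Q)`. Rationalising, `1 - σ/Q = a / (Q (Q + σ))`, and `Q (Q + σ) < 2Q² = 2(σ² + a)`
because `σ < Q`. For the hypothesis-test sample size `a = d² / (2z²)`, and then `a / (2(σ² + a))` is
exactly `d² / (4z²σ² + 2d²)`.
-/

open Real

noncomputable def testRollProfit (N μ σ s n : ℝ) : ℝ :=
  N * μ + (N - 2 * n) * σ ^ 2 / (√π * √(σ ^ 2 + s ^ 2 / n))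

lemma div_two_mul_lt_one_sub_div_sqrt {σ a : ℝ} (hσ : 0 < σ) (ha : 0 < a) :
    a / (2 * (σ ^ 2 + a)) < 1 - σ / √(σ ^ 2 + a) := by
  set Q := √(σ ^ 2 + a)
  have hQsq : Q ^ 2 = σ ^ 2 + a := sq_sqrt (by positivity)
  have hσQ : σ < Q := lt_sqrt_of_sq_lt (by linarith)
  have hQ : 0 < Q := hσ.trans hσQ
  have rationalise : 1 - σ / Q = a / (Q * (Q + σ)) := by
    field_simp
    nlinarith
  rw [rationalise, ← hQsq]
  exact div_lt_div_of_pos_left ha (by positivity) (by nlinarith)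

lemma perfectInfo_sub_testRollProfit (N μ σ s : ℝ) {n : ℝ} (hσ : 0 < σ) (hn : 0 ≤ n) :
    N * (μ + σ / √π) - testRollProfit N μ σ s n =
      σ / √π * (N * (1 - σ / √(σ ^ 2 + s ^ 2 / n)) + 2 * n * σ / √(σ ^ 2 + s ^ 2 / n)) := by
  have hπ : 0 < √π := sqrt_pos.mpr pi_pos
  have hQ : 0 < √(σ ^ 2 + s ^ 2 / n) := sqrt_pos.mpr (by positivity)
  unfold testRollProfit
  field_simp
  ring

lemma lt_perfectInfo_sub_testRollProfit {N μ σ s n : ℝ} (hN : 0 < N) (hσ : 0 < σ)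
    (hs : s ≠ 0) (hn : 0 < n) :
    N * (σ / √π) * (s ^ 2 / n / (2 * (σ ^ 2 + s ^ 2 / n))) <
      N * (μ + σ / √π) - testRollProfit N μ σ s n := by
  have hgap := div_two_mul_lt_one_sub_div_sqrt hσ (show 0 < s ^ 2 / n by positivity)
  have htestArms : 0 < 2 * n * σ / √(σ ^ 2 + s ^ 2 / n) := by positivity
  rw [perfectInfo_sub_testRollProfit N μ σ s hσ hn.le, mul_comm N, mul_assoc]
  gcongr
  linarith [mul_lt_mul_of_pos_left hgap hN]

theorem regret_hypothesis_test_lower_bound (N s σ μ z d : ℝ)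
    (hN : 0 < N) (hs : 0 < s) (hσ : 0 < σ) (hz : 0 < z) (hd : 0 < d)
    (nHT : ℝ) (hnHT : nHT = 2 * z ^ 2 * s ^ 2 / d ^ 2)
    (Reg : ℝ → ℝ)
    (hReg : ∀ n, Reg n = N * (μ + σ / Real.sqrt Real.pi) -
      (N * μ + (N - 2 * n) * σ ^ 2 /
        (Real.sqrt Real.pi * Real.sqrt (σ ^ 2 + s ^ 2 / n)))) :
    Reg nHT > N * (σ / Real.sqrt Real.pi) * d ^ 2 / (4 * z ^ 2 * σ ^ 2 + 2 * d ^ 2) := by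
  have hn : 0 < nHT := by rw [hnHT]; positivity
  have hsn : s ^ 2 / nHT = d ^ 2 / (2 * z ^ 2) := by rw [hnHT]; field_simp
  have hfrac : d ^ 2 / (4 * z ^ 2 * σ ^ 2 + 2 * d ^ 2) =
      s ^ 2 / nHT / (2 * (σ ^ 2 + s ^ 2 / nHT)) := by
    rw [hsn]; field_simp; ring
  rw [hReg, gt_iff_lt, mul_div_assoc, hfrac]
  exact lt_perfectInfo_sub_testRollProfit hN hσ hs.ne' hn
end

section
/- Let N > 0, s > 0 and μ > 0. For σ > 0 define n*(σ) = √(N·s²/(4σ²) + (3s²/(4σ²))²) − 3s²/(4σ²) and the relative regret R(σ) = [N·(μ + σ/√π) − (N·μ + (N − 2·n*(σ))·σ²/(√π·√(σ² + s²/n*(σ))))] / (N·(μ + σ/√π)). Then R(σ) tends to 0 as σ tends to infinity, while R(σ) > 0 for every σ > 0; consequently R attains its maximum at some finite positive value of σ. -/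
open Real Filter Topology Set

/-! Writing `n = n*(σ)` and `Q = √(σ² + s²/n)`, one has `R(σ) = D(σ) / (N (√π μ + σ))` with
`D(σ) = N σ - (N - 2n) σ² / Q`. Since `n > 0` we get `Q > σ`, hence `D > 0`. Since `n ≤ N/6`,
`D(σ) ≤ N σ`, so `R → 0` as `σ → 0⁺`. For large `σ`, `D(σ) ≤ N s² / (2σn) + 2σn`, which stays
bounded because `σ n*(σ) → √N s / 2`, while the denominator grows linearly; so `R → 0` at infinity
as well. A continuous positive function on `(0, ∞)` vanishing at both ends attains its maximum on
a compact subinterval. -/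

theorem exists_isMaxOn_Ioi_of_tendsto {f : ℝ → ℝ} {a c x₁ : ℝ} (hf : ContinuousOn f (Ioi a))
    (hleft : Tendsto f (𝓝[>] a) (𝓝 c)) (htop : Tendsto f atTop (𝓝 c))
    (hx₁ : a < x₁) (hc : c < f x₁) : ∃ x₀ ∈ Ioi a, IsMaxOn f (Ioi a) x₀ := by
  obtain ⟨b, hab, hb⟩ := mem_nhdsGT_iff_exists_Ioo_subset.1 (hleft.eventually (gt_mem_nhds hc))
  obtain ⟨M, hM⟩ := eventually_atTop.1 (htop.eventually (gt_mem_nhds hc))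
  have hsub : Icc (min b x₁) (max M x₁) ⊆ Ioi a := fun x hx =>
    lt_of_lt_of_le (lt_min hab hx₁) hx.1
  obtain ⟨x₀, hx₀, hmax⟩ := isCompact_Icc.exists_isMaxOn
    ⟨x₁, min_le_right _ _, le_max_right _ _⟩ (hf.mono hsub)
  refine ⟨x₀, hsub hx₀, fun x hx => ?_⟩
  have hfx₁ : f x₁ ≤ f x₀ := hmax ⟨min_le_right _ _, le_max_right _ _⟩
  rcases lt_or_ge x (min b x₁) with hlo | hlo
  · exact (hb ⟨hx, hlo.trans_le (min_le_left _ _)⟩).le.trans hfx₁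
  rcases le_or_gt x (max M x₁) with hhi | hhi
  · exact hmax ⟨hlo, hhi⟩
  · exact (hM x ((le_max_left _ _).trans hhi.le)).le.trans hfx₁

theorem lt_sqrt_add_sq {b : ℝ} (hb : 0 < b) (a : ℝ) : a < √(b + a ^ 2) :=
  calc a ≤ |a| := le_abs_self a
    _ = √(a ^ 2) := (sqrt_sq_eq_abs a).symm
    _ < √(b + a ^ 2) := sqrt_lt_sqrt (sq_nonneg a) (lt_add_of_pos_left _ hb)

theorem sub_sq_div_le_sq_sub_sq_div {σ Q : ℝ} (hσ : 0 < σ) (hσQ : σ ≤ Q) :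
    σ - σ ^ 2 / Q ≤ (Q ^ 2 - σ ^ 2) / (2 * σ) := by
  have hQ : 0 < Q := hσ.trans_le hσQ
  have h : σ - σ ^ 2 / Q = σ * (Q - σ) / Q := by field_simp
  rw [h, div_le_div_iff₀ hQ (by positivity)]
  nlinarith [mul_nonneg (sq_nonneg (Q - σ)) (by linarith : 0 ≤ Q + 2 * σ)]

noncomputable def optTestSize (N s σ : ℝ) : ℝ :=
  √(N * s ^ 2 / (4 * σ ^ 2) + (3 * s ^ 2 / (4 * σ ^ 2)) ^ 2) - 3 * s ^ 2 / (4 * σ ^ 2)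

section optTestSize

variable {N s σ : ℝ}

theorem optTestSize_pos (hN : 0 < N) (hs : s ≠ 0) (hσ : σ ≠ 0) : 0 < optTestSize N s σ :=
  sub_pos.2 (lt_sqrt_add_sq (by positivity) _)

theorem optTestSize_le_div_six (hN : 0 ≤ N) : optTestSize N s σ ≤ N / 6 := by
  have ha : 0 ≤ 3 * s ^ 2 / (4 * σ ^ 2) := by positivity
  rw [optTestSize, sub_le_iff_le_add, sqrt_le_left (by positivity)]
  have : N * s ^ 2 / (4 * σ ^ 2) = N / 3 * (3 * s ^ 2 / (4 * σ ^ 2)) := by ring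
  nlinarith

theorem mul_optTestSize (hσ : 0 < σ) : σ * optTestSize N s σ =
    √(N * s ^ 2 / 4 + (3 * s ^ 2 / (4 * σ)) ^ 2) - 3 * s ^ 2 / (4 * σ) := by
  have h : N * s ^ 2 / 4 + (3 * s ^ 2 / (4 * σ)) ^ 2 =
      σ ^ 2 * (N * s ^ 2 / (4 * σ ^ 2) + (3 * s ^ 2 / (4 * σ ^ 2)) ^ 2) := by
    field_simp
  rw [h, sqrt_mul (sq_nonneg σ), sqrt_sq hσ.le, optTestSize]
  field_simp

theorem tendsto_mul_optTestSize :
    Tendsto (fun σ => σ * optTestSize N s σ) atTop (𝓝 √(N * s ^ 2 / 4)) := by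
  have h : Tendsto (fun σ : ℝ => 3 * s ^ 2 / (4 * σ)) atTop (𝓝 0) :=
    tendsto_const_nhds.div_atTop (tendsto_id.const_mul_atTop four_pos)
  have hg : Continuous fun x : ℝ => √(N * s ^ 2 / 4 + x ^ 2) - x := by fun_prop
  have := (hg.tendsto 0).comp h
  simp only [Function.comp_def, zero_pow two_ne_zero, add_zero, sub_zero] at this
  exact this.congr' (eventually_gt_atTop 0 |>.mono fun σ hσ => (mul_optTestSize hσ).symm)

theorem continuousOn_optTestSize : ContinuousOn (optTestSize N s) (Ioi 0) := by
  unfold optTestSize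
  fun_prop (disch := intro x (hx : 0 < x); positivity)

end optTestSize

-- `√π` times the regret `N (μ + σ/√π) - Π(n)` of test size `n` per arm.
noncomputable def scaledRegret (N s σ n : ℝ) : ℝ :=
  N * σ - (N - 2 * n) * σ ^ 2 / √(σ ^ 2 + s ^ 2 / n)

section scaledRegret

variable {N s σ n : ℝ}

theorem scaledRegret_pos (hN : 0 < N) (hs : s ≠ 0) (hσ : 0 < σ) (hn : 0 < n) :
    0 < scaledRegret N s σ n := by
  have hσQ : σ < √(σ ^ 2 + s ^ 2 / n) :=
    (lt_sqrt hσ.le).2 (lt_add_of_pos_right _ (by positivity))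
  rw [scaledRegret, sub_pos]
  calc (N - 2 * n) * σ ^ 2 / √(σ ^ 2 + s ^ 2 / n) ≤ N * σ ^ 2 / √(σ ^ 2 + s ^ 2 / n) := by
        gcongr; linarith
    _ < N * σ := by
        rw [div_lt_iff₀ (hσ.trans hσQ)]
        nlinarith [mul_lt_mul_of_pos_left hσQ (mul_pos hN hσ)]

theorem scaledRegret_le_mul (hn : 2 * n ≤ N) : scaledRegret N s σ n ≤ N * σ :=
  sub_le_self _ (div_nonneg (mul_nonneg (by linarith) (sq_nonneg σ)) (sqrt_nonneg _))

theorem scaledRegret_le (hN : 0 ≤ N) (hσ : 0 < σ) (hn : 0 < n) :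
    scaledRegret N s σ n ≤ N * s ^ 2 / (2 * (σ * n)) + 2 * (σ * n) := by
  set Q := √(σ ^ 2 + s ^ 2 / n)
  have hQsq : Q ^ 2 = σ ^ 2 + s ^ 2 / n := sq_sqrt (by positivity)
  have hσQ : σ ≤ Q := le_sqrt_of_sq_le (le_add_of_nonneg_right (by positivity))
  have hQ : 0 < Q := hσ.trans_le hσQ
  have h₁ : σ - σ ^ 2 / Q ≤ s ^ 2 / n / (2 * σ) := by
    simpa [hQsq] using sub_sq_div_le_sq_sub_sq_div hσ hσQ
  have h₂ : σ ^ 2 / Q ≤ σ := by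
    rw [div_le_iff₀ hQ, sq]
    exact mul_le_mul_of_nonneg_left hσQ hσ.le
  calc scaledRegret N s σ n = N * (σ - σ ^ 2 / Q) + 2 * n * (σ ^ 2 / Q) := by
        rw [scaledRegret]; ring
    _ ≤ N * (s ^ 2 / n / (2 * σ)) + 2 * n * σ := by gcongr
    _ = N * s ^ 2 / (2 * (σ * n)) + 2 * (σ * n) := by field_simp

end scaledRegret

noncomputable def relativeRegret (N s μ σ : ℝ) : ℝ :=
  (N * (μ + σ / √π) -
    (N * μ + (N - 2 * optTestSize N s σ) * σ ^ 2 /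
      (√π * √(σ ^ 2 + s ^ 2 / optTestSize N s σ)))) / (N * (μ + σ / √π))

section relativeRegret

variable {N s μ : ℝ}

theorem relativeRegret_eq (σ : ℝ) :
    relativeRegret N s μ σ = scaledRegret N s σ (optTestSize N s σ) / (N * (√π * μ + σ)) := by
  have hπ : √π ≠ 0 := (sqrt_pos.2 pi_pos).ne'
  rw [relativeRegret, scaledRegret]
  field_simp
  ring

theorem relativeRegret_pos (hN : 0 < N) (hs : s ≠ 0) (hμ : 0 ≤ μ) {σ : ℝ} (hσ : 0 < σ) :
    0 < relativeRegret N s μ σ := by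
  rw [relativeRegret_eq]
  exact div_pos (scaledRegret_pos hN hs hσ (optTestSize_pos hN hs hσ.ne')) (by positivity)

theorem tendsto_relativeRegret_atTop (hN : 0 < N) (hs : s ≠ 0) :
    Tendsto (relativeRegret N s μ) atTop (𝓝 0) := by
  set L := √(N * s ^ 2 / 4)
  have hL : L ≠ 0 := (sqrt_pos.2 (by positivity)).ne'
  have hm := tendsto_mul_optTestSize (N := N) (s := s)
  have hbound : Tendsto (fun σ => N * s ^ 2 / (2 * (σ * optTestSize N s σ)) +
      2 * (σ * optTestSize N s σ)) atTop (𝓝 (N * s ^ 2 / (2 * L) + 2 * L)) :=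
    (tendsto_const_nhds.div (hm.const_mul 2) (mul_ne_zero two_ne_zero hL)).add (hm.const_mul 2)
  have hden : Tendsto (fun σ => N * (√π * μ + σ)) atTop atTop :=
    (tendsto_atTop_add_const_left _ _ tendsto_id).const_mul_atTop hN
  refine squeeze_zero' ?_ ?_ (hbound.div_atTop hden)
  all_goals
    filter_upwards [eventually_gt_atTop 0, eventually_gt_atTop (-(√π * μ))] with σ hσ hσμ
    have hden_pos : 0 < N * (√π * μ + σ) := mul_pos hN (by linarith)
    have hn := optTestSize_pos hN hs (σ := σ) hσ.ne'
    rw [relativeRegret_eq]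
  · exact div_nonneg (scaledRegret_pos hN hs hσ hn).le hden_pos.le
  · exact div_le_div_of_nonneg_right (scaledRegret_le hN.le hσ hn) hden_pos.le

theorem tendsto_relativeRegret_nhdsGT_zero (hN : 0 < N) (hs : s ≠ 0) (hμ : 0 < μ) :
    Tendsto (relativeRegret N s μ) (𝓝[>] 0) (𝓝 0) := by
  have hlin : Tendsto (fun σ => σ / (√π * μ)) (𝓝[>] 0) (𝓝 0) := by
    simpa using ((continuous_id.div_const (√π * μ)).tendsto 0).mono_left nhdsWithin_le_nhds
  refine squeeze_zero' ?_ ?_ hlin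
  all_goals
    filter_upwards [self_mem_nhdsWithin] with σ (hσ : 0 < σ)
  · exact (relativeRegret_pos hN hs hμ.le hσ).le
  · have h2n : 2 * optTestSize N s σ ≤ N := by
      linarith [optTestSize_le_div_six hN.le (s := s) (σ := σ)]
    rw [relativeRegret_eq, ← mul_div_mul_left σ (√π * μ) hN.ne']
    exact div_le_div₀ (by positivity) (scaledRegret_le_mul h2n) (by positivity)
      (mul_le_mul_of_nonneg_left (by linarith) hN.le)

theorem continuousOn_relativeRegret (hN : 0 < N) (hs : s ≠ 0) (hμ : 0 ≤ μ) :
    ContinuousOn (relativeRegret N s μ) (Ioi 0) := by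
  have hn := continuousOn_optTestSize (N := N) (s := s)
  have h : ContinuousOn (fun σ => scaledRegret N s σ (optTestSize N s σ) /
      (N * (√π * μ + σ))) (Ioi 0) := by
    unfold scaledRegret
    fun_prop (disch := intro σ (hσ : 0 < σ); have := optTestSize_pos hN hs hσ.ne'; positivity)
  exact h.congr fun σ _ => relativeRegret_eq σ

end relativeRegret

theorem relative_regret_attains_maximum (N s μ : ℝ)
    (hN : 0 < N) (hs : 0 < s) (hμ : 0 < μ)
    (nstar R : ℝ → ℝ)
    (hnstar : ∀ σ, nstar σ = Real.sqrt (N * s ^ 2 / (4 * σ ^ 2) +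
      (3 * s ^ 2 / (4 * σ ^ 2)) ^ 2) - 3 * s ^ 2 / (4 * σ ^ 2))
    (hR : ∀ σ, R σ =
      (N * (μ + σ / Real.sqrt Real.pi) -
        (N * μ + (N - 2 * nstar σ) * σ ^ 2 /
          (Real.sqrt Real.pi * Real.sqrt (σ ^ 2 + s ^ 2 / nstar σ)))) /
        (N * (μ + σ / Real.sqrt Real.pi))) :
    Filter.Tendsto R Filter.atTop (nhds 0) ∧
    (∀ σ, 0 < σ → 0 < R σ) ∧
    ∃ σ₀, 0 < σ₀ ∧ ∀ σ, 0 < σ → R σ ≤ R σ₀ := by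
  obtain rfl : nstar = optTestSize N s := funext hnstar
  obtain rfl : R = relativeRegret N s μ := funext hR
  have hpos : ∀ σ, 0 < σ → 0 < relativeRegret N s μ σ :=
    fun σ => relativeRegret_pos hN hs.ne' hμ.le
  obtain ⟨σ₀, hσ₀, hmax⟩ := exists_isMaxOn_Ioi_of_tendsto
    (continuousOn_relativeRegret hN hs.ne' hμ.le) (tendsto_relativeRegret_nhdsGT_zero hN hs.ne' hμ)
    (tendsto_relativeRegret_atTop hN hs.ne') one_pos (hpos 1 one_pos)
  exact ⟨tendsto_relativeRegret_atTop hN hs.ne', hpos, σ₀, hσ₀, hmax⟩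
end
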